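/- arXiv:1108.3165 — 4 statements merged into one kernel-verified Lean document; each statement's English description precedes it below -/
import Mathlib

section
/- For nonempty finite subsets S and T of a set I, with ξ_S and ξ_T the uniform probability measures on S and T, one has ‖ξ_S − ξ_T‖₁ = 2(1 − |S ∩ T|/max(|S|, |T|)). -/
noncomputable def xi {I : Type*} [DecidableEq I] (S : Finset I) (i : I) : ℝ :=
  if i ∈ S then ((S.card : ℝ))⁻¹ else 0

lemma aux_xi {I : Type*} [DecidableEq I] (S T : Finset I)
    (hS : S.Nonempty) (hT : T.Nonempty) (hle : S.card ≤ T.card) :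
    ∑ i ∈ S ∪ T, |xi S i - xi T i| =
      2 * (1 - ((S ∩ T).card : ℝ) / (T.card : ℝ)) := by
  have ha : (0 : ℝ) < S.card := by exact_mod_cast hS.card_pos
  have hb : (0 : ℝ) < T.card := by exact_mod_cast hT.card_pos
  have hdisj2 : Disjoint (T ∩ S) (T \ S) := by
    rw [Finset.disjoint_left]; intro a h1 h2
    rw [Finset.mem_inter] at h1; rw [Finset.mem_sdiff] at h2; exact h2.2 h1.2
  have hdisj1 : Disjoint (S \ T) ((T ∩ S) ∪ (T \ S)) := by
    rw [Finset.disjoint_left]; intro a h1 h2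
    rw [Finset.mem_sdiff] at h1
    rw [Finset.mem_union, Finset.mem_inter, Finset.mem_sdiff] at h2
    rcases h2 with h | h
    · exact h1.2 h.1
    · exact h1.2 h.1
  have hsplit : S ∪ T = (S \ T) ∪ ((T ∩ S) ∪ (T \ S)) := by
    ext a
    simp only [Finset.mem_union, Finset.mem_sdiff, Finset.mem_inter]
    tauto
  rw [hsplit, Finset.sum_union hdisj1, Finset.sum_union hdisj2]
  have h1 : ∑ i ∈ S \ T, |xi S i - xi T i| = ((S \ T).card : ℝ) * (S.card : ℝ)⁻¹ := by
    rw [Finset.sum_congr rfl (fun i hi => ?_), Finset.sum_const, nsmul_eq_mul]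
    rw [Finset.mem_sdiff] at hi
    simp [xi, hi.1, hi.2, abs_of_nonneg, (inv_pos.2 ha).le]
  have h2 : ∑ i ∈ T ∩ S, |xi S i - xi T i| =
      ((T ∩ S).card : ℝ) * ((S.card : ℝ)⁻¹ - (T.card : ℝ)⁻¹) := by
    rw [Finset.sum_congr rfl (fun i hi => ?_), Finset.sum_const, nsmul_eq_mul]
    rw [Finset.mem_inter] at hi
    have : (T.card : ℝ)⁻¹ ≤ (S.card : ℝ)⁻¹ := by
      apply inv_anti₀ ha; exact_mod_cast hle
    simp [xi, hi.1, hi.2, abs_of_nonneg, sub_nonneg.2 this]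
  have h3 : ∑ i ∈ T \ S, |xi S i - xi T i| = ((T \ S).card : ℝ) * (T.card : ℝ)⁻¹ := by
    rw [Finset.sum_congr rfl (fun i hi => ?_), Finset.sum_const, nsmul_eq_mul]
    rw [Finset.mem_sdiff] at hi
    simp [xi, hi.1, hi.2, abs_of_nonneg, (inv_pos.2 hb).le]
  rw [h1, h2, h3]
  have e1 := Finset.card_inter_add_card_sdiff S T
  have e2 := Finset.card_inter_add_card_sdiff T S
  have hc1 : ((S \ T).card : ℝ) = S.card - (S ∩ T).card := by
    push_cast [← e1]; ring
  have hc2 : ((T \ S).card : ℝ) = T.card - (S ∩ T).card := by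
    rw [Finset.inter_comm S T]; push_cast [← e2]; ring
  have hc3 : ((T ∩ S).card : ℝ) = ((S ∩ T).card : ℝ) := by rw [Finset.inter_comm]
  rw [hc1, hc2, hc3]
  field_simp
  ring

theorem stmt1 {I : Type*} [DecidableEq I] (S T : Finset I)
    (hS : S.Nonempty) (hT : T.Nonempty) :
    ∑ i ∈ S ∪ T, |xi S i - xi T i| =
      2 * (1 - ((S ∩ T).card : ℝ) / max (S.card : ℝ) (T.card : ℝ)) := by
  rcases le_total S.card T.card with h | h
  · rw [max_eq_right (by exact_mod_cast h)]
    exact aux_xi S T hS hT h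
  · rw [max_eq_left (by exact_mod_cast h), Finset.inter_comm, Finset.union_comm,
      ← aux_xi T S hT hS h]
    exact Finset.sum_congr rfl fun i _ => abs_sub_comm _ _
end

section
/- Let a : ℕ → ℝ be a sequence with 1 ≤ a(k) ≤ M for all k ≤ 2n + R, where M ≥ 1, n > R ≥ 1. Then (1/n) · Σ_{k=n+1}^{2n} a(k+R)/a(k−R) ≥ M^{−2R/n}. -/
/-!
By AM-GM the average of the ratios `a (k + R) / a (k - R)` is at least the `n`-th root of their
product. Shifting the index by `R`, this product has the form `∏_{j < n} g (2R + j) / g j`, which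
telescopes to a ratio of two products of `2R` consecutive values of `g`; since `1 ≤ g ≤ M`, it is
at least `M ^ (-2R)`.
-/

open Finset

theorem prod_range_add_mul_prod_range_comm {M : Type*} [CommMonoid M] (g : ℕ → M) (L d : ℕ) :
    (∏ k ∈ range L, g (d + k)) * ∏ k ∈ range d, g k =
      (∏ k ∈ range d, g (L + k)) * ∏ k ∈ range L, g k := by
  rw [mul_comm, ← prod_range_add, Nat.add_comm, prod_range_add, mul_comm]

theorem inv_pow_le_prod_range_shift_div {g : ℕ → ℝ} {M : ℝ} {L d : ℕ}
    (hM : 0 < M) (hg : ∀ k < L + d, 1 ≤ g k ∧ g k ≤ M) :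
    (M ^ d)⁻¹ ≤ ∏ k ∈ range L, g (d + k) / g k := by
  have hfirst (s : ℕ) (hs : s ≤ L) (k : ℕ) (hk : k ∈ range d) : 1 ≤ g (s + k) ∧ g (s + k) ≤ M :=
    hg _ (by simp only [mem_range] at hk; omega)
  have hnum : 1 ≤ ∏ k ∈ range d, g (L + k) := one_le_prod fun k hk => (hfirst L le_rfl k hk).1
  have hden : ∏ k ∈ range d, g k ≤ M ^ d := by
    simpa using prod_le_prod (fun k hk => zero_le_one.trans (hfirst 0 (Nat.zero_le L) k hk).1)
      fun k hk => (hfirst 0 (Nat.zero_le L) k hk).2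
  have hpos : 0 < ∏ k ∈ range L, g k :=
    prod_pos fun k hk => one_pos.trans_le (hg k (by simp only [mem_range] at hk; omega)).1
  rw [prod_div_distrib, le_div_iff₀ hpos, inv_mul_le_iff₀ (pow_pos hM d)]
  calc ∏ k ∈ range L, g k
      ≤ (∏ k ∈ range d, g (L + k)) * ∏ k ∈ range L, g k := le_mul_of_one_le_left hpos.le hnum
    _ = (∏ k ∈ range L, g (d + k)) * ∏ k ∈ range d, g k :=
        (prod_range_add_mul_prod_range_comm g L d).symm
    _ ≤ (∏ k ∈ range L, g (d + k)) * M ^ d := by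
        gcongr
        exact prod_nonneg fun k hk =>
          zero_le_one.trans (hg _ (by simp only [mem_range] at hk; omega)).1
    _ = M ^ d * ∏ k ∈ range L, g (d + k) := mul_comm _ _

theorem Real.prod_rpow_inv_card_le_sum_div_card {ι : Type*} {s : Finset ι} {z : ι → ℝ}
    (hs : s.Nonempty) (hz : ∀ i ∈ s, 0 ≤ z i) :
    (∏ i ∈ s, z i) ^ ((#s : ℝ)⁻¹) ≤ (∑ i ∈ s, z i) / #s := by
  simpa using Real.geom_mean_le_arith_mean s 1 z (by simp) (by simpa using hs.card_pos) hz

theorem stmt3_general (a : ℕ → ℝ) (M : ℝ) (n R : ℕ) (hn : R < n)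
    (ha : ∀ k ≤ 2 * n + R, 1 ≤ a k ∧ a k ≤ M) :
    (1 / (n : ℝ)) * ∑ k ∈ Finset.Icc (n + 1) (2 * n), a (k + R) / a (k - R) ≥
      M ^ (-(2 * (R : ℝ) / (n : ℝ))) := by
  set g : ℕ → ℝ := fun j => a (n + 1 - R + j)
  have hM : 0 < M := one_pos.trans_le ((ha 0 (Nat.zero_le _)).1.trans (ha 0 (Nat.zero_le _)).2)
  have hsum : ∑ k ∈ Icc (n + 1) (2 * n), a (k + R) / a (k - R) =
      ∑ j ∈ range n, g (2 * R + j) / g j := by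
    rw [← Ico_add_one_right_eq_Icc, sum_Ico_eq_sum_range, show 2 * n + 1 - (n + 1) = n by omega]
    refine sum_congr rfl fun j _ => ?_
    simp only [g]
    congr 2 <;> omega
  have hprod : (M ^ (2 * R))⁻¹ ≤ ∏ j ∈ range n, g (2 * R + j) / g j :=
    inv_pow_le_prod_range_shift_div hM fun k hk => ha _ (by omega)
  have hterms : ∀ j ∈ range n, 0 ≤ g (2 * R + j) / g j := fun j hj => by
    have := (ha (n + 1 - R + (2 * R + j)) (by simp only [mem_range] at hj; omega)).1
    have := (ha (n + 1 - R + j) (by simp only [mem_range] at hj; omega)).1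
    positivity
  rw [hsum, ge_iff_le, one_div_mul_eq_div]
  calc M ^ (-(2 * (R : ℝ) / n)) = ((M ^ (2 * R))⁻¹) ^ ((n : ℝ)⁻¹) := by
        rw [Real.inv_rpow (pow_nonneg hM.le _), ← Real.rpow_natCast, ← Real.rpow_mul hM.le,
          ← Real.rpow_neg hM.le]
        push_cast
        ring_nf
    _ ≤ (∏ j ∈ range n, g (2 * R + j) / g j) ^ ((n : ℝ)⁻¹) := by gcongr
    _ ≤ (∑ j ∈ range n, g (2 * R + j) / g j) / n := by
        simpa using Real.prod_rpow_inv_card_le_sum_div_card (nonempty_range_iff.2 (by omega)) hterms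

theorem stmt3 (a : ℕ → ℝ) (M : ℝ) (n R : ℕ) (hM : 1 ≤ M)
    (hR : 1 ≤ R) (hn : R < n)
    (ha : ∀ k ≤ 2 * n + R, 1 ≤ a k ∧ a k ≤ M) :
    (1 / (n : ℝ)) * ∑ k ∈ Finset.Icc (n + 1) (2 * n), a (k + R) / a (k - R) ≥
      M ^ (-(2 * (R : ℝ) / (n : ℝ))) :=
  stmt3_general a M n R hn ha
end

section
/- Let X be a metric space such that for every n ≥ 1 there exists a uniformly bounded cover 𝒰_n of X with Lebesgue number L(𝒰_n) ≥ 6n and multiplicity m_n < ∞, where (m_n) has subexponential growth (∀ε>0, m_n ≤ e^{εn} eventually). Then X has Yu's property A: there exist maps ζⁿ : X → ℓ¹(X) with ζⁿ_x ≥ 0, ‖ζⁿ_x‖ = 1, supp ζⁿ_x ⊆ B(x, S_n) for some constants S_n, and for every R > 0, lim_{n→∞} sup{ ‖ζⁿ_x − ζⁿ_y‖ : d(x,y) ≤ R } = 0. -/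
open Metric


section Aux
variable {X : Type*} [MetricSpace X]

open Classical in
noncomputable def phiA (n : ℕ) (U : Set X) (x : X) : ℝ :=
  if Uᶜ = (∅ : Set X) then (n : ℝ) else min (n : ℝ) (Metric.infDist x Uᶜ)

lemma phiA_nonneg (n : ℕ) (U : Set X) (x : X) : 0 ≤ phiA n U x := by
  unfold phiA; split_ifs
  · positivity
  · exact le_min (by positivity) Metric.infDist_nonneg

lemma phiA_le (n : ℕ) (U : Set X) (x : X) : phiA n U x ≤ n := by
  unfold phiA; split_ifs
  · exact le_refl _
  · exact min_le_left _ _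

private lemma min_sub_le {c a b d : ℝ} (hd : 0 ≤ d) (h1 : a ≤ b + d) : min c a - min c b ≤ d := by
  rcases le_total c b with hb | hb
  · rw [min_eq_left hb]; linarith [min_le_left c a]
  · rw [min_eq_right hb]; linarith [min_le_right c a]

lemma phiA_lip (n : ℕ) (U : Set X) (x y : X) :
    |phiA n U x - phiA n U y| ≤ dist x y := by
  unfold phiA; split_ifs with h
  · simp [dist_nonneg]
  · have h1 : Metric.infDist x Uᶜ ≤ Metric.infDist y Uᶜ + dist x y :=
      Metric.infDist_le_infDist_add_dist
    have h2 : Metric.infDist y Uᶜ ≤ Metric.infDist x Uᶜ + dist x y := by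
      rw [dist_comm]; exact Metric.infDist_le_infDist_add_dist
    rw [abs_sub_le_iff]
    exact ⟨min_sub_le dist_nonneg h1, min_sub_le dist_nonneg h2⟩

lemma phiA_pos_mem {n : ℕ} {U : Set X} {x : X} (h : 0 < phiA n U x) : x ∈ U := by
  unfold phiA at h; split_ifs at h with hc
  · rw [Set.compl_empty_iff] at hc; rw [hc]; trivial
  · have h' : 0 < Metric.infDist x Uᶜ := lt_min_iff.mp h |>.2
    by_contra hx
    rw [Metric.infDist_zero_of_mem (by simpa using hx)] at h'
    exact lt_irrefl _ h'

lemma phiA_full {n : ℕ} {𝒰 : Set (Set X)} (x : X)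
    (hleb : ∀ B : Set X, Bornology.IsBounded B → Metric.diam B ≤ (6 * n : ℝ) → ∃ U ∈ 𝒰, B ⊆ U) :
    ∃ U ∈ 𝒰, phiA n U x = n := by
  obtain ⟨U, hU, hBU⟩ := hleb (closedBall x (3 * n)) Metric.isBounded_closedBall
    (by
      calc Metric.diam (closedBall x (3 * n)) ≤ 2 * (3 * n) :=
            Metric.diam_closedBall (by positivity)
        _ = 6 * n := by ring)
  refine ⟨U, hU, ?_⟩
  unfold phiA; split_ifs with hc
  · rfl
  · rw [min_eq_left]
    by_contra h
    push_neg at h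
    obtain ⟨p, hp, hpd⟩ := (Metric.infDist_lt_iff (Set.nonempty_iff_ne_empty.mpr hc)).mp h
    have : p ∈ closedBall x (3 * n) := by
      rw [Metric.mem_closedBall, dist_comm]
      have : (n : ℝ) ≤ 3 * n := by nlinarith [Nat.cast_nonneg (α := ℝ) n]
      linarith
    exact hp (hBU this)

open Classical in
noncomputable def zA [Nonempty X] (U : Set X) : X :=
  if h : U.Nonempty then h.some else Classical.arbitrary X

lemma zA_mem [Nonempty X] {U : Set X} (h : U.Nonempty) : zA U ∈ U := by
  unfold zA; rw [dif_pos h]; exact h.some_mem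

end Aux

set_option maxHeartbeats 1000000 in
lemma keyA {X : Type*} [MetricSpace X] [Nonempty X] (m : ℕ → ℕ)
    (hsub : ∀ ε > (0 : ℝ), ∃ N : ℕ, ∀ n ≥ N, (m n : ℝ) ≤ Real.exp (ε * n))
    (hcovers : ∀ n : ℕ, 1 ≤ n → ∃ 𝒰 : Set (Set X),
      (∀ x : X, ∃ U ∈ 𝒰, x ∈ U) ∧
      (∃ D : ℝ, ∀ U ∈ 𝒰, ∀ p ∈ U, ∀ q ∈ U, dist p q ≤ D) ∧
      (∀ B : Set X, Bornology.IsBounded B → Metric.diam B ≤ (6 * n : ℝ) → ∃ U ∈ 𝒰, B ⊆ U) ∧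
      (∀ F : Finset (Set X), (↑F : Set (Set X)) ⊆ 𝒰 →
        (∃ p : X, ∀ U ∈ F, p ∈ U) → F.card ≤ m n)) :
    ∀ R > (0 : ℝ), ∀ ε > (0 : ℝ), ∃ ξ : X → X → ℝ,
      (∀ x y, 0 ≤ ξ x y) ∧
      (∀ x, (∑' y, |ξ x y|) = 1) ∧
      (∃ S : ℝ, ∀ x y, ξ x y ≠ 0 → dist y x ≤ S) ∧
      (∀ x y, dist x y ≤ R → (∑' z, |ξ x z - ξ y z|) ≤ ε) := by
  classical
  intro R hR ε hε
  -- choose the parameter t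
  set t : ℝ := Real.log (1 + ε / 6) / R with ht_def
  have ht : 0 < t := div_pos (Real.log_pos (by linarith)) hR
  have htR : Real.exp (t * R) = 1 + ε / 6 := by
    rw [ht_def, div_mul_cancel₀ _ (ne_of_gt hR)]
    exact Real.exp_log (by linarith)
  -- choose the scale n
  obtain ⟨N₁, hN₁⟩ := hsub (t / 2) (by positivity)
  set n : ℕ := max N₁ (max 1 ⌈(2 : ℝ) / t⌉₊) with hn_def
  have hn1 : 1 ≤ n := le_trans (le_max_left 1 _) (le_max_right _ _)
  have hnt : 2 ≤ t * n := by
    have h1 : (2 : ℝ) / t ≤ (⌈(2 : ℝ) / t⌉₊ : ℝ) := Nat.le_ceil _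
    have h2 : ((⌈(2 : ℝ) / t⌉₊ : ℕ) : ℝ) ≤ (n : ℝ) := by
      exact_mod_cast le_trans (le_max_right 1 _) (le_max_right N₁ _)
    have h3 : (2 : ℝ) / t ≤ (n : ℝ) := le_trans h1 h2
    calc (2 : ℝ) = t * (2 / t) := by field_simp
      _ ≤ t * n := by exact mul_le_mul_of_nonneg_left h3 ht.le
  have hmn : (m n : ℝ) ≤ Real.exp (t * n) - 1 := by
    have h1 : (m n : ℝ) ≤ Real.exp (t / 2 * n) := hN₁ n (le_max_left _ _)
    have hs2 : 2 ≤ Real.exp (t / 2 * n) := by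
      have : (1 : ℝ) ≤ t / 2 * n := by linarith
      nlinarith [Real.add_one_le_exp (t / 2 * n)]
    have hsq : Real.exp (t * n) = Real.exp (t / 2 * n) * Real.exp (t / 2 * n) := by
      rw [← Real.exp_add]; congr 1; ring
    nlinarith
  have hEpos : (0 : ℝ) < Real.exp (t * n) - 1 := by
    have := Real.add_one_le_exp (t * n); linarith
  clear_value t
  clear_value n
  -- get the cover
  obtain ⟨𝒰, hcov, ⟨D, hD⟩, hleb, hmult⟩ := hcovers n hn1
  -- the finite family of members containing x
  have hTfin : ∀ x : X, {U : Set X | U ∈ 𝒰 ∧ x ∈ U}.Finite := by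
    intro x
    by_contra h
    obtain ⟨F, hF, hcard⟩ := Set.Infinite.exists_subset_card_eq h (m n + 1)
    have := hmult F (fun U hU => (hF hU).1) ⟨x, fun U hU => (hF hU).2⟩
    omega
  set F : X → Finset (Set X) := fun x => (hTfin x).toFinset with hF_def
  have hFmem : ∀ x U, U ∈ F x ↔ U ∈ 𝒰 ∧ x ∈ U := by
    intro x U; rw [hF_def]; exact (hTfin x).mem_toFinset
  have hFcard : ∀ x, (F x).card ≤ m n := by
    intro x
    exact hmult (F x) (fun U hU => ((hFmem x U).1 hU).1) ⟨x, fun U hU => ((hFmem x U).1 hU).2⟩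
  clear_value F
  -- the weights
  set g : Set X → X → ℝ := fun U x => Real.exp (t * phiA n U x) - 1 with hg_def
  have hg0 : ∀ U x, 0 ≤ g U x := by
    intro U x
    have : (0:ℝ) ≤ t * phiA n U x := mul_nonneg ht.le (phiA_nonneg n U x)
    have := Real.add_one_le_exp (t * phiA n U x)
    simp only [hg_def]; linarith
  have hg_mem : ∀ U x, g U x ≠ 0 → x ∈ U := by
    intro U x h
    apply phiA_pos_mem (n := n)
    rcases (phiA_nonneg n U x).lt_or_eq with h' | h'
    · exact h'
    · exfalso; apply h; simp only [hg_def, ← h', mul_zero, Real.exp_zero, sub_self]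
  clear_value g
  -- the denominators
  set A : X → ℝ := fun x => ∑ U ∈ F x, g U x with hA_def
  have hA_ge : ∀ x, Real.exp (t * n) - 1 ≤ A x := by
    intro x
    obtain ⟨U₀, hU₀, hφ⟩ := phiA_full x hleb
    have hx : x ∈ U₀ := by
      apply phiA_pos_mem (n := n); rw [hφ]
      exact_mod_cast Nat.pos_of_ne_zero (by omega)
    have hU₀F : U₀ ∈ F x := (hFmem x U₀).2 ⟨hU₀, hx⟩
    calc Real.exp (t * n) - 1 = g U₀ x := by simp only [hg_def]; rw [hφ]
      _ ≤ A x := Finset.single_le_sum (fun U _ => hg0 U x) hU₀F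
  have hApos : ∀ x, 0 < A x := fun x => lt_of_lt_of_le hEpos (hA_ge x)
  clear_value A
  -- the vector field
  set ξ : X → X → ℝ := fun x w => (∑ U ∈ F x, if zA U = w then g U x else 0) / A x with hξ_def
  clear_value ξ
  have hξ0 : ∀ x w, 0 ≤ ξ x w := by
    intro x w
    simp only [hξ_def]
    apply div_nonneg _ (hApos x).le
    exact Finset.sum_nonneg fun U _ => by split_ifs; exacts [hg0 U x, le_refl 0]
  have hnum_supp : ∀ x w, w ∉ (F x).image zA →
      (∑ U ∈ F x, if zA U = w then g U x else 0) = 0 := by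
    intro x w hw
    apply Finset.sum_eq_zero
    intro U hU
    rw [if_neg]
    intro h
    exact hw (Finset.mem_image.2 ⟨U, hU, h⟩)
  have hsum_num : ∀ (x : X) (s : Finset X), (F x).image zA ⊆ s →
      ∑ w ∈ s, (∑ U ∈ F x, if zA U = w then g U x else 0) = A x := by
    intro x s hs
    rw [Finset.sum_comm]
    simp only [hA_def]
    apply Finset.sum_congr rfl
    intro U hU
    rw [Finset.sum_ite_eq s (zA U) (fun _ => g U x), if_pos (hs (Finset.mem_image_of_mem zA hU))]
  have hξ_norm : ∀ x, (∑' w, |ξ x w|) = 1 := by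
    intro x
    rw [tsum_eq_sum (s := (F x).image zA) (fun w hw => by
      rw [abs_eq_zero, hξ_def]
      exact div_eq_zero_iff.2 (Or.inl (hnum_supp x w hw)))]
    have : ∀ w ∈ (F x).image zA, |ξ x w| = ξ x w := fun w _ => abs_of_nonneg (hξ0 x w)
    rw [Finset.sum_congr rfl this]
    simp only [hξ_def]
    rw [← Finset.sum_div, hsum_num x _ (le_refl _), div_self (hApos x).ne']
  -- support condition
  have hξ_supp : ∃ S : ℝ, ∀ x y, ξ x y ≠ 0 → dist y x ≤ S := by
    refine ⟨D, fun x y h => ?_⟩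
    have hnum : (∑ U ∈ F x, if zA U = y then g U x else 0) ≠ 0 := by
      intro h0
      apply h
      simp only [hξ_def]
      exact div_eq_zero_iff.2 (Or.inl h0)
    obtain ⟨U, hU, hne⟩ := Finset.exists_ne_zero_of_sum_ne_zero hnum
    have hzy : zA U = y := by
      by_contra hc; exact hne (if_neg hc)
    have hgne : g U x ≠ 0 := by
      intro h0; exact hne (by rw [hzy, if_pos rfl]; exact h0)
    have hxU : x ∈ U := hg_mem U x hgne
    have hyU : y ∈ U := by rw [← hzy]; exact zA_mem ⟨x, hxU⟩
    exact hD U ((hFmem x U).1 hU).1 y hyU x hxU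
  -- the variation estimate
  have hξ_var : ∀ x y, dist x y ≤ R → (∑' z, |ξ x z - ξ y z|) ≤ ε := by
    intro x y hxy
    set Sxy : Finset (Set X) := F x ∪ F y with hSxy_def
    have hgx_zero : ∀ U ∈ Sxy, U ∉ F x → g U x = 0 := by
      intro U hU hUx
      by_contra h0
      have hxU : x ∈ U := hg_mem U x h0
      have h𝒰 : U ∈ 𝒰 := by
        rcases Finset.mem_union.1 hU with h | h
        · exact ((hFmem x U).1 h).1
        · exact ((hFmem y U).1 h).1
      exact hUx ((hFmem x U).2 ⟨h𝒰, hxU⟩)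
    have hgy_zero : ∀ U ∈ Sxy, U ∉ F y → g U y = 0 := by
      intro U hU hUy
      by_contra h0
      have hyU : y ∈ U := hg_mem U y h0
      have h𝒰 : U ∈ 𝒰 := by
        rcases Finset.mem_union.1 hU with h | h
        · exact ((hFmem x U).1 h).1
        · exact ((hFmem y U).1 h).1
      exact hUy ((hFmem y U).2 ⟨h𝒰, hyU⟩)
    have hAx : ∑ U ∈ Sxy, g U x = A x := by
      simp only [hA_def]
      exact (Finset.sum_subset Finset.subset_union_left
        (fun U hU hUx => hgx_zero U hU hUx)).symm
    have hAy : ∑ U ∈ Sxy, g U y = A y := by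
      simp only [hA_def]
      exact (Finset.sum_subset Finset.subset_union_right
        (fun U hU hUy => hgy_zero U hU hUy)).symm
    -- pointwise difference bound
    have hnumx : ∀ w, ξ x w = ∑ U ∈ Sxy, (if zA U = w then g U x / A x else 0) := by
      intro w
      simp only [hξ_def]
      rw [Finset.sum_subset (Finset.subset_union_left (s₂ := F y))
        (fun U hU hUx => by rw [hgx_zero U hU hUx]; simp)]
      rw [Finset.sum_div]
      exact Finset.sum_congr rfl fun U _ => by split_ifs <;> simp
    have hnumy : ∀ w, ξ y w = ∑ U ∈ Sxy, (if zA U = w then g U y / A y else 0) := by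
      intro w
      simp only [hξ_def]
      rw [Finset.sum_subset (Finset.subset_union_right (s₁ := F x))
        (fun U hU hUy => by rw [hgy_zero U hU hUy]; simp)]
      rw [Finset.sum_div]
      exact Finset.sum_congr rfl fun U _ => by split_ifs <;> simp
    have hpt : ∀ w, |ξ x w - ξ y w| ≤
        ∑ U ∈ Sxy, (if zA U = w then |g U x / A x - g U y / A y| else 0) := by
      intro w
      rw [hnumx w, hnumy w, ← Finset.sum_sub_distrib]
      refine le_trans (Finset.abs_sum_le_sum_abs _ _) (le_of_eq ?_)
      exact Finset.sum_congr rfl fun U _ => by split_ifs <;> simp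
    -- both sides vanish outside W
    set W : Finset X := (F x).image zA ∪ (F y).image zA with hW_def
    have hvan : ∀ w ∉ W, |ξ x w - ξ y w| = 0 := by
      intro w hw
      have h1 : ξ x w = 0 := by
        simp only [hξ_def]
        exact div_eq_zero_iff.2 (Or.inl (hnum_supp x w
          (fun h => hw (Finset.mem_union_left _ h))))
      have h2 : ξ y w = 0 := by
        simp only [hξ_def]
        exact div_eq_zero_iff.2 (Or.inl (hnum_supp y w
          (fun h => hw (Finset.mem_union_right _ h))))
      rw [h1, h2, sub_zero, abs_zero]
    rw [tsum_eq_sum (s := W) hvan]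
    -- exchange sums
    have hstep1 : ∑ w ∈ W, |ξ x w - ξ y w| ≤
        ∑ U ∈ Sxy, |g U x / A x - g U y / A y| := by
      calc ∑ w ∈ W, |ξ x w - ξ y w|
          ≤ ∑ w ∈ W, ∑ U ∈ Sxy, (if zA U = w then |g U x / A x - g U y / A y| else 0) :=
            Finset.sum_le_sum fun w _ => hpt w
        _ = ∑ U ∈ Sxy, ∑ w ∈ W, (if zA U = w then |g U x / A x - g U y / A y| else 0) :=
            Finset.sum_comm
        _ ≤ ∑ U ∈ Sxy, |g U x / A x - g U y / A y| := by
            apply Finset.sum_le_sum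
            intro U _
            rw [Finset.sum_ite_eq W (zA U) (fun _ => |g U x / A x - g U y / A y|)]
            split_ifs
            · exact le_refl _
            · positivity
    -- the per-member bound
    set Δ : ℝ := ∑ U ∈ Sxy, |g U x - g U y| with hΔ_def
    have hAdiff : |A y - A x| ≤ Δ := by
      rw [← hAx, ← hAy, ← Finset.sum_sub_distrib]
      refine le_trans (Finset.abs_sum_le_sum_abs _ _) (le_of_eq ?_)
      exact Finset.sum_congr rfl fun U _ => abs_sub_comm _ _
    have hstep2 : ∑ U ∈ Sxy, |g U x / A x - g U y / A y| ≤ 2 * Δ / A x := by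
      have hAxp := hApos x
      have hAyp := hApos y
      have hperU : ∀ U ∈ Sxy, |g U x / A x - g U y / A y| ≤
          |g U x - g U y| / A x + g U y * |A y - A x| / (A x * A y) := by
        intro U _
        have hid : g U x / A x - g U y / A y =
            (g U x - g U y) / A x + g U y * (A y - A x) / (A x * A y) := by
          field_simp
          ring
        rw [hid]
        refine le_trans (abs_add_le _ _) ?_
        apply add_le_add
        · exact le_of_eq (by rw [abs_div, abs_of_pos hAxp])
        · exact le_of_eq (by
            rw [abs_div, abs_mul, abs_mul, abs_of_nonneg (hg0 U y), abs_of_pos hAxp,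
              abs_of_pos hAyp])
      calc ∑ U ∈ Sxy, |g U x / A x - g U y / A y|
          ≤ ∑ U ∈ Sxy, (|g U x - g U y| / A x + g U y * |A y - A x| / (A x * A y)) :=
            Finset.sum_le_sum hperU
        _ = Δ / A x + (A y) * |A y - A x| / (A x * A y) := by
            rw [Finset.sum_add_distrib, ← Finset.sum_div, ← hΔ_def]
            congr 1
            rw [← Finset.sum_div, ← Finset.sum_mul, hAy]
        _ = Δ / A x + |A y - A x| / A x := by
            congr 1
            rw [mul_comm (A x) (A y), mul_div_mul_left _ _ (hApos y).ne']
        _ ≤ Δ / A x + Δ / A x := by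
            gcongr
        _ = 2 * Δ / A x := by ring
    -- bound Δ
    have hΔ_bound : Δ ≤ (Real.exp (t * R) - 1) * (A x + 2 * m n) := by
      have hperU : ∀ U ∈ Sxy, |g U x - g U y| ≤ (Real.exp (t * R) - 1) * (g U x + 1) := by
        intro U _
        set a : ℝ := t * phiA n U x with ha_def
        set b : ℝ := t * phiA n U y with hb_def
        have hab : |a - b| ≤ t * R := by
          rw [ha_def, hb_def, ← mul_sub, abs_mul, abs_of_pos ht]
          exact mul_le_mul_of_nonneg_left (le_trans (phiA_lip n U x y) hxy) ht.le
        have hgx1 : g U x + 1 = Real.exp a := by simp only [hg_def, ha_def]; ring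
        have habs : |Real.exp a - Real.exp b| ≤ (Real.exp (t * R) - 1) * Real.exp a := by
          rcases le_total a b with hle | hle
          · rw [abs_of_nonpos (by simp [Real.exp_le_exp, hle])]
            have h1 : Real.exp b = Real.exp a * Real.exp (b - a) := by
              rw [← Real.exp_add]; congr 1; ring
            have h2 : Real.exp (b - a) ≤ Real.exp (t * R) := by
              rw [Real.exp_le_exp]
              have := abs_le.1 hab
              linarith [this.2]
            nlinarith [Real.exp_pos a]
          · rw [abs_of_nonneg (by simp [Real.exp_le_exp, hle])]
            have h1 : Real.exp a = Real.exp b * Real.exp (a - b) := by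
              rw [← Real.exp_add]; congr 1; ring
            have h2 : Real.exp (a - b) ≤ Real.exp (t * R) := by
              rw [Real.exp_le_exp]
              have := abs_le.1 hab
              linarith [this.1]
            have h3 : Real.exp b ≤ Real.exp a := Real.exp_le_exp.2 hle
            nlinarith [Real.exp_pos b, Real.exp_pos a]
        have : |g U x - g U y| = |Real.exp a - Real.exp b| := by
          simp only [hg_def, ha_def, hb_def]; congr 1; ring
        rw [this, hgx1]
        exact habs
      have hcard : (Sxy.card : ℝ) ≤ 2 * m n := by
        have h1 : Sxy.card ≤ (F x).card + (F y).card := Finset.card_union_le _ _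
        have h2 : (F x).card + (F y).card ≤ 2 * m n := by
          have := hFcard x; have := hFcard y; omega
        exact_mod_cast le_trans h1 h2
      calc Δ ≤ ∑ U ∈ Sxy, (Real.exp (t * R) - 1) * (g U x + 1) :=
            Finset.sum_le_sum hperU
        _ = (Real.exp (t * R) - 1) * (A x + Sxy.card) := by
            rw [← Finset.mul_sum, Finset.sum_add_distrib, hAx, Finset.sum_const, nsmul_eq_mul,
              mul_one]
        _ ≤ (Real.exp (t * R) - 1) * (A x + 2 * m n) := by
            have hfac : (0:ℝ) ≤ Real.exp (t * R) - 1 := by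
              have := Real.add_one_le_exp (t * R)
              nlinarith [mul_pos ht hR]
            apply mul_le_mul_of_nonneg_left _ hfac
            linarith [hcard]
    -- conclude
    have hmA : (m n : ℝ) ≤ A x := le_trans hmn (hA_ge x)
    have hΔnn : 0 ≤ Δ := Finset.sum_nonneg fun U _ => abs_nonneg _
    have hfinal : 2 * Δ / A x ≤ ε := by
      rw [div_le_iff₀ (hApos x)]
      have hfac : Real.exp (t * R) - 1 = ε / 6 := by rw [htR]; ring
      have h1 : Δ ≤ (ε / 6) * (A x + 2 * m n) := by rw [← hfac]; exact hΔ_bound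
      have h2 : (0:ℝ) ≤ m n := Nat.cast_nonneg _
      nlinarith [hApos x]
    calc ∑ w ∈ W, |ξ x w - ξ y w| ≤ ∑ U ∈ Sxy, |g U x / A x - g U y / A y| := hstep1
      _ ≤ 2 * Δ / A x := hstep2
      _ ≤ ε := hfinal
  exact ⟨ξ, hξ0, hξ_norm, hξ_supp, hξ_var⟩

theorem stmt10 {X : Type*} [MetricSpace X] (m : ℕ → ℕ)
    (hsub : ∀ ε > (0 : ℝ), ∃ N : ℕ, ∀ n ≥ N, (m n : ℝ) ≤ Real.exp (ε * n))
    (hcovers : ∀ n : ℕ, 1 ≤ n → ∃ 𝒰 : Set (Set X),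
      (∀ x : X, ∃ U ∈ 𝒰, x ∈ U) ∧
      (∃ D : ℝ, ∀ U ∈ 𝒰, ∀ p ∈ U, ∀ q ∈ U, dist p q ≤ D) ∧
      (∀ B : Set X, Bornology.IsBounded B → Metric.diam B ≤ (6 * n : ℝ) → ∃ U ∈ 𝒰, B ⊆ U) ∧
      (∀ F : Finset (Set X), (↑F : Set (Set X)) ⊆ 𝒰 →
        (∃ p : X, ∀ U ∈ F, p ∈ U) → F.card ≤ m n)) :
    ∃ ζ : ℕ → X → X → ℝ,
      (∀ n x y, 0 ≤ ζ n x y) ∧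
      (∀ n x, (∑' y, |ζ n x y|) = 1) ∧
      (∀ n, ∃ S : ℝ, ∀ x y, ζ n x y ≠ 0 → dist y x ≤ S) ∧
      (∀ R > (0 : ℝ), ∀ ε > (0 : ℝ), ∃ N : ℕ, ∀ n ≥ N, ∀ x y : X,
        dist x y ≤ R → (∑' z, |ζ n x z - ζ n y z|) ≤ ε) := by
  rcases isEmpty_or_nonempty X with hX | hX
  · exact ⟨fun _ _ _ => 0, fun n x y => le_refl 0, fun n x => (IsEmpty.false x).elim,
      fun n => ⟨0, fun x => (IsEmpty.false x).elim⟩,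
      fun R _ ε _ => ⟨0, fun n _ x => (IsEmpty.false x).elim⟩⟩
  · have key' : ∀ k : ℕ, ∃ ξ : X → X → ℝ,
        (∀ x y, 0 ≤ ξ x y) ∧
        (∀ x, (∑' y, |ξ x y|) = 1) ∧
        (∃ S : ℝ, ∀ x y, ξ x y ≠ 0 → dist y x ≤ S) ∧
        (∀ x y, dist x y ≤ (k : ℝ) + 1 → (∑' z, |ξ x z - ξ y z|) ≤ 1 / ((k : ℝ) + 1)) :=
      fun k => keyA m hsub hcovers ((k : ℝ) + 1) (by positivity) (1 / ((k : ℝ) + 1))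
        (by positivity)
    choose ξ h1 h2 h3 h4 using key'
    refine ⟨ξ, h1, h2, h3, ?_⟩
    intro R hR ε hε
    obtain ⟨N₀, hN₀⟩ := exists_nat_ge (max R (1 / ε))
    refine ⟨N₀, fun n hn x y hxy => ?_⟩
    have hcast : (N₀ : ℝ) ≤ n := Nat.cast_le.2 hn
    have hRn : dist x y ≤ (n : ℝ) + 1 := by
      have : R ≤ (N₀ : ℝ) := le_trans (le_max_left _ _) hN₀
      linarith
    have hb := h4 n x y hRn
    have hεn : 1 / ((n : ℝ) + 1) ≤ ε := by
      rw [div_le_iff₀ (by positivity)]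
      have h1' : 1 / ε ≤ (N₀ : ℝ) := le_trans (le_max_right _ _) hN₀
      have hinv : ε * (1 / ε) = 1 := by field_simp
      nlinarith
    linarith
end

section
/- Let S, T be nonempty finite subsets of a set I with a common nonempty subset A ⊆ S ∩ T and suppose S ∪ T ⊆ U for some finite set U with |U| ≤ M and |A| ≥ 1. Then ‖ξ_S − ξ_T‖₁ ≤ 2(1 − |A|/|U|). -/
open Finset

lemma min_inv_inv_of_pos {a b : ℝ} (ha : 0 < a) (hb : 0 < b) : min a⁻¹ b⁻¹ = (max a b)⁻¹ := by
  rcases le_total a b with h | h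
  · rw [max_eq_right h, min_eq_right (inv_anti₀ ha h)]
  · rw [max_eq_left h, min_eq_left (inv_anti₀ hb h)]

section

variable {I : Type*} [DecidableEq I]

lemma sum_xi (S V : Finset I) : ∑ i ∈ V, xi S i = #(V ∩ S) / #S := by
  simp only [xi, sum_ite_mem, sum_const, nsmul_eq_mul, div_eq_mul_inv]

lemma sum_xi_eq_one_of_subset {S V : Finset I} (hS : S.Nonempty) (hSV : S ⊆ V) :
    ∑ i ∈ V, xi S i = 1 := by
  rw [sum_xi, inter_eq_right.mpr hSV, div_self (by exact_mod_cast hS.card_pos.ne')]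

lemma min_xi_xi (S T : Finset I) (i : I) :
    min (xi S i) (xi T i) = if i ∈ S ∩ T then (max (#S : ℝ) #T)⁻¹ else 0 := by
  by_cases hS : i ∈ S <;> by_cases hT : i ∈ T
  · have hS₀ : (0 : ℝ) < #S := by exact_mod_cast card_pos.mpr ⟨i, hS⟩
    have hT₀ : (0 : ℝ) < #T := by exact_mod_cast card_pos.mpr ⟨i, hT⟩
    simp only [xi, hS, hT, mem_inter, and_self, if_true, min_inv_inv_of_pos hS₀ hT₀]
  all_goals simp [xi, hS, hT]

theorem sum_abs_xi_sub_xi {S T : Finset I} (hS : S.Nonempty) (hT : T.Nonempty) :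
    ∑ i ∈ S ∪ T, |xi S i - xi T i| = 2 * (1 - #(S ∩ T) / max (#S : ℝ) #T) := by
  have habs (a b : ℝ) : |a - b| = a + b - 2 * min a b := by
    rw [← max_sub_min_eq_abs']; linarith [min_add_max a b]
  have hmin : ∑ i ∈ S ∪ T, min (xi S i) (xi T i) = #(S ∩ T) / max (#S : ℝ) #T := by
    rw [sum_congr rfl fun i _ => min_xi_xi S T i, sum_ite_mem, sum_const, nsmul_eq_mul,
      inter_eq_right.mpr inter_subset_union, div_eq_mul_inv]
  simp only [habs, sum_sub_distrib, sum_add_distrib, ← mul_sum, hmin,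
    sum_xi_eq_one_of_subset hS subset_union_left, sum_xi_eq_one_of_subset hT subset_union_right]
  ring

end

theorem stmt12_general {I : Type*} [DecidableEq I] (A S T U : Finset I)
    (hS : S.Nonempty) (hT : T.Nonempty)
    (hAST : A ⊆ S ∩ T) (hSTU : S ∪ T ⊆ U) :
    ∑ i ∈ S ∪ T, |xi S i - xi T i| ≤ 2 * (1 - (A.card : ℝ) / (U.card : ℝ)) := by
  rw [sum_abs_xi_sub_xi hS hT]
  have hmax_pos : (0 : ℝ) < max (#S : ℝ) #T := lt_max_of_lt_left (by exact_mod_cast hS.card_pos)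
  have hmax_le : max (#S : ℝ) #T ≤ #U := by
    exact_mod_cast max_le (card_le_card (subset_union_left.trans hSTU))
      (card_le_card (subset_union_right.trans hSTU))
  have hA_le : (#A : ℝ) ≤ #(S ∩ T) := by exact_mod_cast card_le_card hAST
  linarith [div_le_div₀ (by positivity) hA_le hmax_pos hmax_le]

theorem stmt12 {I : Type*} [DecidableEq I] (A S T U : Finset I) (M : ℕ)
    (hS : S.Nonempty) (hT : T.Nonempty) (hA : A.Nonempty)
    (hAST : A ⊆ S ∩ T) (hSTU : S ∪ T ⊆ U) (hU : U.card ≤ M) :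
    ∑ i ∈ S ∪ T, |xi S i - xi T i| ≤ 2 * (1 - (A.card : ℝ) / (U.card : ℝ)) :=
  stmt12_general A S T U hS hT hAST hSTU
end
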